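/- Fix a network (K, G) with fading structure π and a nonempty L ⊆ K. If Σ_{J⊆L} π_L(J)·N(M_J) > 0, then the lower bound of the paper's Theorem 3 always dominates the inverse interference degree: Σ_{J⊆L} π_L(J)·n(M_J) ≥ (1/d_I(G)) · Σ_{J⊆L} π_L(J)·N(M_J). -/

import Mathlib

open scoped BigOperators
open Filter MeasureTheory ProbabilityTheory

/-- `S` is an independent set of the interference graph `G` contained in the
set of links `J` (pairwise non-adjacent links). -/
def IsIndepIn {V : Type*} (G : SimpleGraph V) (J S : Finset V) : Prop :=
  S ⊆ J ∧ ∀ u ∈ S, ∀ v ∈ S, ¬ G.Adj u v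

/-- `S` is a maximal independent set of `J`. -/
def IsMaxIndepIn {V : Type*} (G : SimpleGraph V) (J S : Finset V) : Prop :=
  IsIndepIn G J S ∧ ∀ T, IsIndepIn G J T → S ⊆ T → S = T

/-- 0/1 indicator vector of a finite set of links. -/
def indVec {V : Type*} [DecidableEq V] (S : Finset V) : V → ℝ :=
  fun v => if v ∈ S then 1 else 0

/-- `M_{J,L}` : the (finite) set of 0/1 indicator vectors of the maximal independent
sets of `J`; the vectors are encoded in the ambient space `ℝ^V`, coordinates outside `J`
are automatically `0`. -/
def Mset {V : Type*} [DecidableEq V] (G : SimpleGraph V) (J : Finset V) : Set (V → ℝ) :=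
  indVec '' {S | IsMaxIndepIn G J S}

/-- `CH(M_{J,L})` : the convex hull of `M_{J,L}`. -/
noncomputable def CHM {V : Type*} [DecidableEq V] (G : SimpleGraph V) (J : Finset V) :
    Set (V → ℝ) :=
  convexHull ℝ (Mset G J)

/-- A fading structure `π` on the set of links: nonnegative weights summing to one. -/
def IsFading {V : Type*} [Fintype V] [DecidableEq V] (π : Finset V → ℝ) : Prop :=
  (∀ J, 0 ≤ π J) ∧ ∑ J : Finset V, π J = 1

/-- `Φ(L) = { Σ_{J ⊆ K} π(J) η_J : η_J ∈ CH(M_{J∩L,L}) }`. -/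
def Phi {V : Type*} [Fintype V] [DecidableEq V] (G : SimpleGraph V) (π : Finset V → ℝ)
    (L : Finset V) : Set (V → ℝ) :=
  {φ | ∃ η : Finset V → V → ℝ, (∀ J, η J ∈ CHM G (J ∩ L)) ∧
    φ = ∑ J : Finset V, π J • η J}

/-- The fading local pooling factor `σ*_L(π)` of a set of links `L`. -/
noncomputable def sigmaL {V : Type*} [Fintype V] [DecidableEq V] (G : SimpleGraph V)
    (π : Finset V → ℝ) (L : Finset V) : ℝ :=
  sInf {σ : ℝ | 0 ≤ σ ∧ ∃ φ1 ∈ Phi G π L, ∃ φ2 ∈ Phi G π L, ∀ v ∈ L, φ2 v ≤ σ * φ1 v}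

/-- The Fading-LPF `σ*_G(π)` of the network: minimum of `σ*_L(π)` over nonempty `L ⊆ K`. -/
noncomputable def sigmaG {V : Type*} [Fintype V] [DecidableEq V] (G : SimpleGraph V)
    (π : Finset V → ℝ) : ℝ :=
  sInf (sigmaL G π '' {L : Finset V | L.Nonempty})
/-- The marginal distribution `π_L` induced on a subset of links `L`. -/
noncomputable def marginal {V : Type*} [Fintype V] [DecidableEq V] (π : Finset V → ℝ)
    (L J : Finset V) : ℝ :=
  ∑ I : Finset V, if I ∩ L = J then π I else 0

/-- `n(M_J)`: minimum cardinality of a maximal independent set of `J`. -/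
noncomputable def nM {V : Type*} (G : SimpleGraph V) (J : Finset V) : ℕ :=
  sInf (Finset.card '' {S | IsMaxIndepIn G J S})

/-- `N(M_J)`: maximum cardinality of a maximal independent set of `J`. -/
noncomputable def NM {V : Type*} (G : SimpleGraph V) (J : Finset V) : ℕ :=
  sSup (Finset.card '' {S | IsMaxIndepIn G J S})

/-- interference degree of a link `l`: maximum cardinality of an independent set of `G`
contained in the closed neighborhood of `l`. -/
noncomputable def dI {V : Type*} (G : SimpleGraph V) (l : V) : ℕ :=
  sSup (Finset.card '' {S : Finset V | (∀ u ∈ S, ∀ v ∈ S, ¬ G.Adj u v) ∧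
    ∀ v ∈ S, v = l ∨ G.Adj l v})

/-- interference degree `d_I(G)` of the whole interference graph. -/
noncomputable def dIG {V : Type*} (G : SimpleGraph V) : ℕ :=
  sSup (Set.range (dI G))

/-- interference degree `d_I(S)` of the subgraph of `G` induced on the set of links `S`. -/
noncomputable def dISet {V : Type*} (G : SimpleGraph V) (Sset : Finset V) : ℕ :=
  sSup (Finset.card '' {T : Finset V | T ⊆ Sset ∧ (∀ u ∈ T, ∀ v ∈ T, ¬ G.Adj u v) ∧
    ∃ l ∈ Sset, ∀ v ∈ T, v = l ∨ G.Adj l v})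

/-- The throughput region `Λ_f`. -/
def LambdaF {V : Type*} [Fintype V] [DecidableEq V] (G : SimpleGraph V) (π : Finset V → ℝ) :
    Set (V → ℝ) :=
  {lam | (∀ v, 0 < lam v) ∧ ∃ η : Finset V → V → ℝ,
    (∀ J, η J ∈ CHM G J) ∧ ∀ v, lam v ≤ ∑ J : Finset V, π J * η J v}

/-- The scaled region `Λ_f(x)`. -/
def LambdaX {V : Type*} [Fintype V] [DecidableEq V] (G : SimpleGraph V) (π : Finset V → ℝ)
    (x : Finset V → ℝ) : Set (V → ℝ) :=
  {lam | (∀ v, 0 < lam v) ∧ ∃ η : Finset V → V → ℝ,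
    (∀ J, η J ∈ CHM G J) ∧ ∀ v, lam v ≤ ∑ J : Finset V, x J * π J * η J v}

/-- The standard (non-fading) local pooling factor of a graph `H`. -/
noncomputable def stdLPF (W : Type*) [Fintype W] [DecidableEq W] (H : SimpleGraph W) : ℝ :=
  sInf ((fun L => sInf {σ : ℝ | 0 ≤ σ ∧ ∃ φ1 ∈ CHM H L, ∃ φ2 ∈ CHM H L,
    ∀ v ∈ L, φ2 v ≤ σ * φ1 v}) '' {L : Finset W | L.Nonempty})

/-- discrete measurable structure on global channel states -/
instance {α : Type*} : MeasurableSpace (Finset α) := ⊤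

/-- The queue-length process `Q` evolves according to
`Q_l[t+1] = (Q_l[t] − C_l[t]·1{l ∈ S[t]})⁺ + A_l[t]`, `Q_l[0] = 0`,
where `GS t ω` is the set of 'ON' links and `S t ω` is the schedule. -/
def QueueEvol {V : Type*} [DecidableEq V] {Ω : Type*} (A : ℕ → V → Ω → ℕ)
    (GS S : ℕ → Ω → Finset V) (Q : ℕ → V → Ω → ℕ) : Prop :=
  (∀ l ω, Q 0 l ω = 0) ∧
  ∀ t l ω, Q (t + 1) l ω =
    (Q t l ω - (if l ∈ GS t ω ∧ l ∈ S t ω then 1 else 0)) + A t l ω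

/-- `S` is a greedy maximal schedule for the weights `w`: a maximal independent set of `G`
with an enumeration `s_0, …, s_{k-1}` such that each `s_i` has maximal weight among the
links neither equal nor adjacent to any of `s_0, …, s_{i-1}`. -/
def IsGreedySchedule {V : Type*} [Fintype V] [DecidableEq V] (G : SimpleGraph V)
    (w : V → ℝ) (S : Finset V) : Prop :=
  IsMaxIndepIn G Finset.univ S ∧
  ∃ s : ℕ → V, S = (Finset.range S.card).image s ∧
    (∀ i < S.card, ∀ j < S.card, s i = s j → i = j) ∧
    ∀ i < S.card, ∀ v : V, (∀ j < i, v ≠ s j ∧ ¬ G.Adj v (s j)) → w v ≤ w (s i)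

/-- A GMS policy: at every time and in every sample point, the schedule is a greedy
maximal schedule for the weights `w_l = Q_l[t]·C_l[t]`. -/
def IsGMSPolicy {V : Type*} [Fintype V] [DecidableEq V] {Ω : Type*} (G : SimpleGraph V)
    (GS S : ℕ → Ω → Finset V) (Q : ℕ → V → Ω → ℕ) : Prop :=
  ∀ t ω, IsGreedySchedule G
    (fun l => (Q t l ω : ℝ) * (if l ∈ GS t ω then 1 else 0)) (S t ω)

/-!
Any maximal independent set `T` of `J` dominates `J`, so each member of an independent set
`S ⊆ J` can be sent to a member of `T` in its closed neighbourhood. Every fibre of this map is an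
independent set inside a closed neighbourhood, hence has at most `d_I(G)` elements, and so
`|S| ≤ d_I(G) |T|`. Thus `N(M_J) ≤ d_I(G) n(M_J)` for every `J`, and the claim follows by averaging
against the nonnegative weights `π_L(J)`.
-/

open Finset

section InterferenceDegree

variable {V : Type*} (G : SimpleGraph V)

theorem exists_isMaxIndepIn (J : Finset V) : ∃ S, IsMaxIndepIn G J S := by
  classical
  obtain ⟨S, hS, hmax⟩ := exists_max_image {S ∈ J.powerset | IsIndepIn G J S} card
    ⟨∅, mem_filter.mpr ⟨empty_mem_powerset J, by simp [IsIndepIn]⟩⟩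
  have hSJ : IsIndepIn G J S := (mem_filter.mp hS).2
  refine ⟨S, hSJ, fun T hT hST => ?_⟩
  by_contra hne
  have hlt : #S < #T := card_lt_card (lt_of_le_of_ne hST hne)
  exact hlt.not_ge (hmax T (mem_filter.mpr ⟨mem_powerset.mpr hT.1, hT⟩))

variable {G}

theorem IsMaxIndepIn.exists_eq_or_adj [DecidableEq V] {J T : Finset V}
    (hT : IsMaxIndepIn G J T) {s : V} (hs : s ∈ J) : ∃ t ∈ T, s = t ∨ G.Adj t s := by
  by_contra! hfar
  have hindep : IsIndepIn G J (insert s T) := by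
    refine ⟨insert_subset hs hT.1.1, ?_⟩
    simp only [mem_insert, forall_eq_or_imp]
    exact ⟨⟨G.irrefl, fun v hv h => (hfar v hv).2 h.symm⟩,
      fun u hu => ⟨(hfar u hu).2, hT.1.2 u hu⟩⟩
  have hsT : s ∈ T := hT.2 _ hindep (subset_insert s T) ▸ mem_insert_self s T
  exact (hfar s hsT).1 rfl

variable [Fintype V]

theorem bddAbove_card_image (P : Set (Finset V)) : BddAbove (card '' P) :=
  ⟨Fintype.card V, by rintro n ⟨S, -, rfl⟩; exact card_le_univ S⟩

theorem card_le_dI {l : V} {S : Finset V} (hS : ∀ u ∈ S, ∀ v ∈ S, ¬ G.Adj u v)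
    (hl : ∀ v ∈ S, v = l ∨ G.Adj l v) : #S ≤ dI G l :=
  le_csSup (bddAbove_card_image _) ⟨S, ⟨hS, hl⟩, rfl⟩

theorem dI_le_dIG (l : V) : dI G l ≤ dIG G := by
  refine le_csSup ⟨Fintype.card V, ?_⟩ ⟨l, rfl⟩
  rintro n ⟨m, rfl⟩
  exact csSup_le ⟨0, ∅, by simp⟩ (by rintro x ⟨S, -, rfl⟩; exact card_le_univ S)

theorem IsIndepIn.card_le_dIG_mul_card [DecidableEq V] {J S T : Finset V}
    (hS : IsIndepIn G J S) (hT : IsMaxIndepIn G J T) : #S ≤ dIG G * #T := by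
  choose! f hfT hf using fun s (hs : s ∈ S) => hT.exists_eq_or_adj (hS.1 hs)
  refine card_le_mul_card_image_of_maps_to hfT _ fun t _ => ?_
  refine (card_le_dI (fun u hu v hv => hS.2 u (mem_filter.mp hu).1 v (mem_filter.mp hv).1)
    fun v hv => ?_).trans (dI_le_dIG t)
  obtain ⟨hvS, rfl⟩ := mem_filter.mp hv
  exact hf v hvS

theorem NM_le_dIG_mul_nM (J : Finset V) : NM G J ≤ dIG G * nM G J := by
  classical
  obtain ⟨S₀, hS₀⟩ := exists_isMaxIndepIn G J
  have hne : (card '' {S | IsMaxIndepIn G J S}).Nonempty := ⟨#S₀, S₀, hS₀, rfl⟩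
  obtain ⟨S, hS, hSN⟩ := Nat.sSup_mem hne (bddAbove_card_image _)
  obtain ⟨T, hT, hTn⟩ := Nat.sInf_mem hne
  rw [NM, nM, ← hSN, ← hTn]
  exact hS.1.card_le_dIG_mul_card hT

end InterferenceDegree

theorem marginal_nonneg {V : Type*} [Fintype V] [DecidableEq V] {π : Finset V → ℝ}
    (hπ : ∀ I, 0 ≤ π I) (L J : Finset V) : 0 ≤ marginal π L J :=
  sum_nonneg fun I _ => by split_ifs <;> simp [hπ I]

theorem lower_bound_dominates_inverse_degree_general {V : Type*} [Fintype V] [DecidableEq V]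
    (G : SimpleGraph V) (π : Finset V → ℝ) (hπ : IsFading π)
    (L : Finset V) :
    (1 / (dIG G : ℝ)) * ∑ J ∈ L.powerset, marginal π L J * (NM G J : ℝ) ≤
      ∑ J ∈ L.powerset, marginal π L J * (nM G J : ℝ) := by
  have hweight := marginal_nonneg hπ.1 L
  have hpointwise (J : Finset V) : (NM G J : ℝ) ≤ dIG G * nM G J := by
    exact_mod_cast NM_le_dIG_mul_nM J
  -- `1 / 0 = 0`, so the case `d_I(G) = 0` needs only the nonnegativity of the right-hand side.
  rw [one_div]
  refine inv_mul_le_of_le_mul₀ (Nat.cast_nonneg _)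
    (sum_nonneg fun J _ => mul_nonneg (hweight J) (Nat.cast_nonneg _)) ?_
  rw [mul_sum]
  refine sum_le_sum fun J _ => ?_
  calc marginal π L J * NM G J ≤ marginal π L J * (dIG G * nM G J) :=
        mul_le_mul_of_nonneg_left (hpointwise J) (hweight J)
    _ = dIG G * (marginal π L J * nM G J) := by ring

/-- The lower bound of Theorem 3 dominates the inverse interference degree:
`Σ_{J⊆L} π_L(J) n(M_J) ≥ (1/d_I(G)) Σ_{J⊆L} π_L(J) N(M_J)`. -/
theorem lower_bound_dominates_inverse_degree {V : Type*} [Fintype V] [DecidableEq V]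
    (G : SimpleGraph V) (π : Finset V → ℝ) (hπ : IsFading π)
    (L : Finset V) (hL : L.Nonempty)
    (hpos : 0 < ∑ J ∈ L.powerset, marginal π L J * (NM G J : ℝ)) :
    (1 / (dIG G : ℝ)) * ∑ J ∈ L.powerset, marginal π L J * (NM G J : ℝ) ≤
      ∑ J ∈ L.powerset, marginal π L J * (nM G J : ℝ) :=
  lower_bound_dominates_inverse_degree_general G π hπ L
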